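/- arXiv:1603.03571 — 5 statements merged into one kernel-verified Lean document; each statement's English description precedes it below -/
import Mathlib

section
/- Let a_1, ..., a_m be positive real numbers. Then the sum, over all permutations (A_1, ..., A_m) of (a_1, ..., a_m), of the product ∏_{l=1}^{m} (A_1 + A_2 + ... + A_l)^{-1} equals (∏_{l=1}^{m} a_l)^{-1}. -/
theorem sum_Ici_succ' (n : ℕ) (f : Fin (n+1) → ℝ) (l : Fin n) :
    ∑ j ∈ Finset.Ici l.succ, f j = ∑ k ∈ Finset.Ici l, f k.succ := by
  have h1 : ∀ (N : ℕ) (s : Fin N) (g : Fin N → ℝ),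
      ∑ j ∈ Finset.Ici s, g j = ∑ j : Fin N, if s ≤ j then g j else 0 := by
    intro N s g
    rw [← Finset.sum_filter]
    congr 1
    ext j; simp
  rw [h1, h1, Fin.sum_univ_succ]
  simp [Fin.succ_le_succ_iff, (Fin.succ_pos l).not_ge]

theorem aux_Ici (m : ℕ) (a : Fin m → ℝ) (ha : ∀ i, 0 < a i) :
    ∑ σ : Equiv.Perm (Fin m), ∏ l : Fin m, (∑ j ∈ Finset.Ici l, a (σ j))⁻¹
      = (∏ l : Fin m, a l)⁻¹ := by
  induction m with
  | zero => simp
  | succ n ih =>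
    rw [← Equiv.sum_comp (Equiv.Perm.decomposeFin (n := n)).symm, Fintype.sum_prod_type]
    have hprod : 0 < ∏ l, a l := Finset.prod_pos (fun i _ => ha i)
    have hsum : 0 < ∑ j, a j := Finset.sum_pos (fun i _ => ha i) ⟨0, Finset.mem_univ 0⟩
    have key : ∀ p : Fin (n+1),
        ∑ e : Equiv.Perm (Fin n), ∏ l : Fin (n+1),
          (∑ j ∈ Finset.Ici l, a (Equiv.Perm.decomposeFin.symm (p, e) j))⁻¹
        = (∑ j, a j)⁻¹ * (a p / ∏ l, a l) := by
      intro p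
      have hb : ∀ k : Fin n, 0 < a (Equiv.swap 0 p k.succ) := fun k => ha _
      have step : ∀ e : Equiv.Perm (Fin n),
          ∏ l : Fin (n+1), (∑ j ∈ Finset.Ici l, a (Equiv.Perm.decomposeFin.symm (p, e) j))⁻¹
          = (∑ j, a j)⁻¹ *
            ∏ l : Fin n, (∑ k ∈ Finset.Ici l, a (Equiv.swap 0 p (e k).succ))⁻¹ := by
        intro e
        rw [Fin.prod_univ_succ]
        congr 1
        · congr 1
          rw [show Finset.Ici (0 : Fin (n+1)) = Finset.univ by ext j; simp [Fin.zero_le]]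
          exact Equiv.sum_comp (Equiv.Perm.decomposeFin.symm (p, e)) a
        · refine Finset.prod_congr rfl fun l _ => ?_
          rw [sum_Ici_succ']
          congr 1
          refine Finset.sum_congr rfl fun k _ => ?_
          rw [Equiv.Perm.decomposeFin_symm_apply_succ]
      rw [Finset.sum_congr rfl (fun e _ => step e), ← Finset.mul_sum,
        ih (fun k => a (Equiv.swap 0 p k.succ)) hb]
      congr 1
      have : ∏ j : Fin (n+1), a (Equiv.swap 0 p j) = ∏ l, a l :=
        Equiv.prod_comp (Equiv.swap 0 p) a
      rw [Fin.prod_univ_succ] at this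
      simp only [Equiv.swap_apply_left] at this
      have hbp : (0:ℝ) < ∏ k : Fin n, a (Equiv.swap 0 p k.succ) :=
        Finset.prod_pos (fun k _ => hb k)
      rw [eq_div_iff (ne_of_gt hprod), ← this, mul_comm (a p), ← mul_assoc,
        inv_mul_cancel₀ (ne_of_gt hbp), one_mul]
    rw [Finset.sum_congr rfl (fun p _ => key p), ← Finset.mul_sum]
    rw [← Finset.sum_div, div_eq_mul_inv, ← mul_assoc, inv_mul_cancel₀ (ne_of_gt hsum), one_mul]

theorem sum_Iic_rev' (n : ℕ) (f : Fin n → ℝ) (l : Fin n) :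
    ∑ j ∈ Finset.Iic l, f j.rev = ∑ k ∈ Finset.Ici l.rev, f k := by
  apply Finset.sum_nbij' (i := fun j => j.rev) (j := fun k => k.rev)
  all_goals simp [Fin.rev_le_rev]
  intro j hj
  rwa [← Fin.rev_le_rev, Fin.rev_rev] at hj

/-- Lemma 1 (sum over permutations of reciprocal partial-sum products):
for positive reals `a 0, ..., a (m-1)`, the sum over all permutations `σ` of
`∏_{l} (a (σ 0) + ... + a (σ l))⁻¹` equals `(∏ l, a l)⁻¹`. -/
theorem sum_perm_partial_sum_prod_inv (m : ℕ) (a : Fin m → ℝ) (ha : ∀ i, 0 < a i) :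
    ∑ σ : Equiv.Perm (Fin m), ∏ l : Fin m, (∑ j ∈ Finset.Iic l, a (σ j))⁻¹
      = (∏ l : Fin m, a l)⁻¹ := by
  rw [← Equiv.sum_comp (Equiv.mulRight (Fin.revPerm : Equiv.Perm (Fin m)))
    (fun σ => ∏ l : Fin m, (∑ j ∈ Finset.Iic l, a (σ j))⁻¹), ← aux_Ici m a ha]
  refine Finset.sum_congr rfl fun τ _ => ?_
  rw [← Equiv.prod_comp (Fin.revPerm : Equiv.Perm (Fin m))
    (fun l => (∑ j ∈ Finset.Ici l, a (τ j))⁻¹)]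
  refine Finset.prod_congr rfl fun l _ => ?_
  congr 1
  simpa using sum_Iic_rev' m (fun j => a (τ j)) l
end

section
/- Let a > 0 and μ₂ > 0 be reals and let m, n₂ be integers with 1 ≤ m ≤ n₂. Then ∑_{k=m}^{n₂} ( μ₂^k / (n₂−k)! ) · ∏_{l=n₂−k}^{n₂−1} (a + μ₂ l)^{-1} = ( μ₂^m / ((n₂−m)! · a) ) · ∏_{l=n₂−m+1}^{n₂−1} (a + μ₂ l)^{-1}. -/
lemma telescoping_aux
    (a μ₂ : ℝ) (ha : 0 < a) (hμ₂ : 0 < μ₂) (n₂ : ℕ) :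
    ∀ d m : ℕ, 1 ≤ m → m + d = n₂ →
    ∑ k ∈ Finset.Icc m n₂,
        (μ₂ ^ k / ((n₂ - k).factorial : ℝ)) *
          ∏ l ∈ Finset.Ico (n₂ - k) n₂, (a + μ₂ * (l : ℝ))⁻¹
      = (μ₂ ^ m / (((n₂ - m).factorial : ℝ) * a)) *
          ∏ l ∈ Finset.Ico (n₂ - m + 1) n₂, (a + μ₂ * (l : ℝ))⁻¹ := by
  intro d
  induction d with
  | zero =>
    intro m hm h
    have hmn : m = n₂ := by omega
    subst hmn
    have hn : 0 < m := hm
    rw [Finset.Icc_self, Finset.sum_singleton]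
    have hms : m - m = 0 := by omega
    rw [hms]
    rw [Finset.prod_eq_prod_Ico_succ_bot hn (fun l => (a + μ₂ * (l : ℝ))⁻¹)]
    push_cast
    rw [Nat.factorial_zero]
    field_simp
    simp
  | succ d ih =>
    intro m hm h
    have hmlt : m < n₂ := by omega
    rw [← Finset.Ico_add_one_right_eq_Icc,
      Finset.sum_eq_sum_Ico_succ_bot (by omega : m < n₂ + 1),
      Finset.Ico_add_one_right_eq_Icc, ih (m + 1) (by omega) (by omega)]
    have h1 : n₂ - m = d + 1 := by omega
    have h2 : n₂ - (m + 1) = d := by omega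
    rw [h1, h2]
    have hlt : d + 1 < n₂ := by omega
    rw [Finset.prod_eq_prod_Ico_succ_bot hlt (fun l => (a + μ₂ * (l : ℝ))⁻¹)]
    have hx : (0:ℝ) < a + μ₂ * ((d + 1 : ℕ) : ℝ) := by positivity
    have hfac : ((d + 1).factorial : ℝ) = (d + 1) * (d.factorial : ℝ) := by
      push_cast [Nat.factorial_succ]; ring
    set P := ∏ l ∈ Finset.Ico (d + 1 + 1) n₂, (a + μ₂ * (l : ℝ))⁻¹ with hP
    rw [hfac]
    have hd : (0:ℝ) < (d.factorial : ℝ) := by positivity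
    field_simp
    push_cast at hx ⊢
    ring

/-- Telescoping identity used to sum the stationary probabilities of states
with no idle pool-1 servers in the many-server N-system. -/
theorem telescoping_sum_identity
    (a μ₂ : ℝ) (ha : 0 < a) (hμ₂ : 0 < μ₂)
    (m n₂ : ℕ) (hm : 1 ≤ m) (hmn : m ≤ n₂) :
    ∑ k ∈ Finset.Icc m n₂,
        (μ₂ ^ k / ((n₂ - k).factorial : ℝ)) *
          ∏ l ∈ Finset.Ico (n₂ - k) n₂, (a + μ₂ * (l : ℝ))⁻¹
      = (μ₂ ^ m / (((n₂ - m).factorial : ℝ) * a)) *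
          ∏ l ∈ Finset.Ico (n₂ - m + 1) n₂, (a + μ₂ * (l : ℝ))⁻¹ :=
  telescoping_aux a μ₂ ha hμ₂ n₂ (n₂ - m) m hm (by omega)
end

section
/- Let a > 0 and μ₂ > 0 be reals and let n₂ ≥ 1 be an integer. Then ∑_{k=0}^{n₂} ( n₂! / (n₂−k)! ) · μ₂^k · ∏_{l=n₂−k}^{n₂−1} (a + μ₂ l)^{-1} = (a + μ₂ n₂)/a. -/
/-- Closed form for the sum giving (up to constants) the stationary probability
that the many-server N-system has no idle servers at all. -/
theorem no_idle_sum_closed_form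
    (a μ₂ : ℝ) (ha : 0 < a) (hμ₂ : 0 < μ₂)
    (n₂ : ℕ) (hn₂ : 1 ≤ n₂) :
    ∑ k ∈ Finset.range (n₂ + 1),
        ((n₂.factorial : ℝ) / ((n₂ - k).factorial : ℝ)) * μ₂ ^ k *
          ∏ l ∈ Finset.Ico (n₂ - k) n₂, (a + μ₂ * (l : ℝ))⁻¹
      = (a + μ₂ * (n₂ : ℝ)) / a := by
  set d : ℕ → ℝ := fun k => ((n₂.factorial : ℝ) / ((n₂ - k).factorial : ℝ)) * μ₂ ^ k *
          ∏ l ∈ Finset.Ico (n₂ - k) n₂, (a + μ₂ * (l : ℝ))⁻¹ with hd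
  set Q : ℕ → ℝ := fun k => d k * (a + μ₂ * ((n₂ - k : ℕ) : ℝ)) / a with hQ
  have hpos : ∀ l : ℕ, 0 < a + μ₂ * (l : ℝ) := fun l => by positivity
  have hstep : ∀ k < n₂, d k = Q k - Q (k + 1) := by
    intro k hk
    have h1 : n₂ - (k + 1) + 1 = n₂ - k := by omega
    -- recursion for d
    have hfac : ((n₂ - k).factorial : ℝ) =
        ((n₂ - k : ℕ) : ℝ) * ((n₂ - (k + 1)).factorial : ℝ) := by
      rw [← h1, Nat.factorial_succ]
      push_cast
      ring
    have hprod : ∏ l ∈ Finset.Ico (n₂ - (k + 1)) n₂, (a + μ₂ * (l : ℝ))⁻¹ =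
        (a + μ₂ * ((n₂ - (k + 1) : ℕ) : ℝ))⁻¹ *
          ∏ l ∈ Finset.Ico (n₂ - k) n₂, (a + μ₂ * (l : ℝ))⁻¹ := by
      rw [Finset.prod_eq_prod_Ico_succ_bot (by omega : n₂ - (k + 1) < n₂), h1]
    have hdk : d (k + 1) = d k * (μ₂ * ((n₂ - k : ℕ) : ℝ)) *
        (a + μ₂ * ((n₂ - (k + 1) : ℕ) : ℝ))⁻¹ := by
      simp only [hd]
      rw [hprod, hfac, pow_succ]
      have h2 : ((n₂ - k : ℕ) : ℝ) ≠ 0 := by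
        have : 0 < n₂ - k := by omega
        positivity
      have h3 : ((n₂ - (k + 1)).factorial : ℝ) ≠ 0 := by positivity
      field_simp
    have hne : a + μ₂ * ((n₂ - (k + 1) : ℕ) : ℝ) ≠ 0 := (hpos _).ne'
    have hcast : ((n₂ - k : ℕ) : ℝ) = ((n₂ - (k + 1) : ℕ) : ℝ) + 1 := by
      rw [← h1]; push_cast; ring
    simp only [hQ, hdk]
    field_simp
    rw [hcast]
    ring
  rw [Finset.sum_range_succ, Finset.sum_congr rfl (fun k hk => hstep k (Finset.mem_range.mp hk)),
    Finset.sum_range_sub' Q n₂]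
  have hQ0 : Q 0 = (a + μ₂ * (n₂ : ℝ)) / a := by
    simp [hQ, hd, Finset.Ico_self]
    field_simp
  have hQn : Q n₂ = d n₂ := by
    simp only [hQ, Nat.sub_self, Nat.cast_zero, mul_zero, add_zero]
    field_simp
  rw [hQ0, hQn]
  ring
end

section
/- Let θ ∈ (0,1). Define G(x₁,x₂) = (x₁+x₂)·log(x₁+x₂) − x₁·log x₁ − x₂·log x₂ − (θ−x₁)·log(θ−x₁) − (1−θ−x₂)·log(1−θ−x₂) on the open rectangle D = {(x₁,x₂) : 0 < x₁ < θ, 0 < x₂ < 1−θ}. Then G is strictly concave on D. -/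
open Real

/-- Two-term log-sum inequality. -/
lemma log_sum_two (α β γ δ : ℝ) (hα : 0 < α) (hβ : 0 < β) (hγ : 0 < γ) (hδ : 0 < δ) :
    (α + γ) * Real.log ((α + γ) / (β + δ)) ≤ α * Real.log (α / β) + γ * Real.log (γ / δ) := by
  have hbd : 0 < β + δ := by linarith
  have h := Real.convexOn_mul_log.2 (Set.mem_Ici.mpr (le_of_lt (div_pos hα hβ)))
    (Set.mem_Ici.mpr (le_of_lt (div_pos hγ hδ)))
    (le_of_lt (div_pos hβ hbd)) (le_of_lt (div_pos hδ hbd))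
    (by field_simp)
  simp only [smul_eq_mul] at h
  have e1 : β / (β + δ) * (α / β) + δ / (β + δ) * (γ / δ) = (α + γ) / (β + δ) := by
    field_simp
  rw [e1] at h
  have h2 := mul_le_mul_of_nonneg_left h (le_of_lt hbd)
  calc (α + γ) * Real.log ((α + γ) / (β + δ))
      = (β + δ) * ((α + γ) / (β + δ) * Real.log ((α + γ) / (β + δ))) := by
        field_simp
    _ ≤ (β + δ) * (β / (β + δ) * (α / β * Real.log (α / β))
          + δ / (β + δ) * (γ / δ * Real.log (γ / δ))) := h2
    _ = α * Real.log (α / β) + γ * Real.log (γ / δ) := by field_simp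

/-- Jensen gap identity for `t ↦ t * log t`. -/
lemma jensen_gap (a b u v : ℝ) (hu : 0 < u) (hv : 0 < v) (ha : 0 < a) (hb : 0 < b) :
    a * (u * Real.log u) + b * (v * Real.log v)
      - (a * u + b * v) * Real.log (a * u + b * v)
    = (a * u) * Real.log (u / (a * u + b * v))
      + (b * v) * Real.log (v / (a * u + b * v)) := by
  have hm : 0 < a * u + b * v := by positivity
  rw [Real.log_div (ne_of_gt hu) (ne_of_gt hm), Real.log_div (ne_of_gt hv) (ne_of_gt hm)]
  ring

/-- Concavity step for the entropy part. -/
lemma entropy_step (a b x₁ x₂ y₁ y₂ : ℝ) (hx₁ : 0 < x₁) (hx₂ : 0 < x₂)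
    (hy₁ : 0 < y₁) (hy₂ : 0 < y₂) (ha : 0 < a) (hb : 0 < b) (hab : a + b = 1) :
    a * ((x₁ + x₂) * Real.log (x₁ + x₂)) + b * ((y₁ + y₂) * Real.log (y₁ + y₂))
      - (a * (x₁ + x₂) + b * (y₁ + y₂)) * Real.log (a * (x₁ + x₂) + b * (y₁ + y₂))
    ≤ (a * (x₁ * Real.log x₁) + b * (y₁ * Real.log y₁)
        - (a * x₁ + b * y₁) * Real.log (a * x₁ + b * y₁))
      + (a * (x₂ * Real.log x₂) + b * (y₂ * Real.log y₂)
        - (a * x₂ + b * y₂) * Real.log (a * x₂ + b * y₂)) := by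
  have hm₁ : 0 < a * x₁ + b * y₁ := by positivity
  have hm₂ : 0 < a * x₂ + b * y₂ := by positivity
  rw [jensen_gap a b x₁ y₁ hx₁ hy₁ ha hb, jensen_gap a b x₂ y₂ hx₂ hy₂ ha hb,
    jensen_gap a b (x₁ + x₂) (y₁ + y₂) (by linarith) (by linarith) ha hb]
  set m₁ := a * x₁ + b * y₁ with hm₁def
  set m₂ := a * x₂ + b * y₂ with hm₂def
  have hS : a * (x₁ + x₂) + b * (y₁ + y₂) = m₁ + m₂ := by rw [hm₁def, hm₂def]; ring
  rw [hS]
  have hx := log_sum_two (a * x₁) (a * m₁) (a * x₂) (a * m₂)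
    (by positivity) (by positivity) (by positivity) (by positivity)
  have hy := log_sum_two (b * y₁) (b * m₁) (b * y₂) (b * m₂)
    (by positivity) (by positivity) (by positivity) (by positivity)
  rw [mul_div_mul_left x₁ m₁ ha.ne', mul_div_mul_left x₂ m₂ ha.ne',
    show a * x₁ + a * x₂ = a * (x₁ + x₂) by ring,
    show a * m₁ + a * m₂ = a * (m₁ + m₂) by ring,
    mul_div_mul_left (x₁ + x₂) (m₁ + m₂) ha.ne'] at hx
  rw [mul_div_mul_left y₁ m₁ hb.ne', mul_div_mul_left y₂ m₂ hb.ne',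
    show b * y₁ + b * y₂ = b * (y₁ + y₂) by ring,
    show b * m₁ + b * m₂ = b * (m₁ + m₂) by ring,
    mul_div_mul_left (y₁ + y₂) (m₁ + m₂) hb.ne'] at hy
  linarith

lemma aux_le (a b u v : ℝ) (hu : 0 ≤ u) (hv : 0 ≤ v) (ha : 0 ≤ a) (hb : 0 ≤ b)
    (hab : a + b = 1) :
    (a * u + b * v) * Real.log (a * u + b * v)
      ≤ a * (u * Real.log u) + b * (v * Real.log v) := by
  have h := Real.convexOn_mul_log.2 (Set.mem_Ici.mpr hu) (Set.mem_Ici.mpr hv) ha hb hab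
  simpa only [smul_eq_mul] using h

lemma aux_lt (a b u v : ℝ) (hu : 0 ≤ u) (hv : 0 ≤ v) (huv : u ≠ v) (ha : 0 < a)
    (hb : 0 < b) (hab : a + b = 1) :
    (a * u + b * v) * Real.log (a * u + b * v)
      < a * (u * Real.log u) + b * (v * Real.log v) := by
  have h := Real.strictConvexOn_mul_log.2 (Set.mem_Ici.mpr hu) (Set.mem_Ici.mpr hv)
    huv ha hb hab
  simpa only [smul_eq_mul] using h

/-- The nonlinear part `G` of the exponential rate function in the Laplace
analysis of the N-system stationary distribution is strictly concave on the
open rectangle `(0,θ) × (0,1-θ)`. -/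
theorem rate_function_strictConcaveOn (θ : ℝ) (hθ : θ ∈ Set.Ioo (0 : ℝ) 1) :
    StrictConcaveOn ℝ {p : ℝ × ℝ | 0 < p.1 ∧ p.1 < θ ∧ 0 < p.2 ∧ p.2 < 1 - θ}
      (fun p : ℝ × ℝ =>
        (p.1 + p.2) * Real.log (p.1 + p.2) - p.1 * Real.log p.1 - p.2 * Real.log p.2
          - (θ - p.1) * Real.log (θ - p.1) - (1 - θ - p.2) * Real.log (1 - θ - p.2)) := by
  constructor
  · have hset : {p : ℝ × ℝ | 0 < p.1 ∧ p.1 < θ ∧ 0 < p.2 ∧ p.2 < 1 - θ}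
        = (Set.Ioo (0 : ℝ) θ) ×ˢ (Set.Ioo (0 : ℝ) (1 - θ)) := by
      ext p
      simp [Set.mem_Ioo, and_assoc]
    rw [hset]
    exact (convex_Ioo _ _).prod (convex_Ioo _ _)
  · intro x hx y hy hxy a b ha hb hab
    obtain ⟨hx1, hx2, hx3, hx4⟩ := hx
    obtain ⟨hy1, hy2, hy3, hy4⟩ := hy
    simp only [Prod.smul_fst, Prod.smul_snd, Prod.fst_add, Prod.snd_add, smul_eq_mul]
    have hE := entropy_step a b x.1 x.2 y.1 y.2 hx1 hx3 hy1 hy3 ha hb hab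
    have e1 : θ - (a * x.1 + b * y.1) = a * (θ - x.1) + b * (θ - y.1) := by
      linear_combination θ * hab.symm
    have e2 : 1 - θ - (a * x.2 + b * y.2) = a * (1 - θ - x.2) + b * (1 - θ - y.2) := by
      linear_combination (1 - θ) * hab.symm
    have esum : a * x.1 + b * y.1 + (a * x.2 + b * y.2)
        = a * (x.1 + x.2) + b * (y.1 + y.2) := by ring
    rw [e1, e2, esum]
    have hT1le : (a * (θ - x.1) + b * (θ - y.1)) * Real.log (a * (θ - x.1) + b * (θ - y.1))
        ≤ a * ((θ - x.1) * Real.log (θ - x.1)) + b * ((θ - y.1) * Real.log (θ - y.1)) :=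
      aux_le a b _ _ (by linarith) (by linarith) ha.le hb.le hab
    have hT2le : (a * (1 - θ - x.2) + b * (1 - θ - y.2))
          * Real.log (a * (1 - θ - x.2) + b * (1 - θ - y.2))
        ≤ a * ((1 - θ - x.2) * Real.log (1 - θ - x.2))
          + b * ((1 - θ - y.2) * Real.log (1 - θ - y.2)) :=
      aux_le a b _ _ (by linarith) (by linarith) ha.le hb.le hab
    have hne : x.1 ≠ y.1 ∨ x.2 ≠ y.2 := by
      by_contra h
      push_neg at h
      exact hxy (Prod.ext h.1 h.2)
    rcases hne with h1 | h2
    · have hT1 : (a * (θ - x.1) + b * (θ - y.1)) * Real.log (a * (θ - x.1) + b * (θ - y.1))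
          < a * ((θ - x.1) * Real.log (θ - x.1)) + b * ((θ - y.1) * Real.log (θ - y.1)) :=
        aux_lt a b _ _ (by linarith) (by linarith)
          (fun h => h1 (by linarith [h])) ha hb hab
      linarith
    · have hT2 : (a * (1 - θ - x.2) + b * (1 - θ - y.2))
            * Real.log (a * (1 - θ - x.2) + b * (1 - θ - y.2))
          < a * ((1 - θ - x.2) * Real.log (1 - θ - x.2))
            + b * ((1 - θ - y.2) * Real.log (1 - θ - y.2)) :=
        aux_lt a b _ _ (by linarith) (by linarith)
          (fun h => h2 (by linarith [h])) ha hb hab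
      linarith
end

section
/- Let λ > 0, μ₂ > 0, n₂ > 0, 0 < m₂ < n₂ be reals, let α ∈ (0,1] and β ∈ (0,1) with α + β > 1, and suppose (n₂ − m₂)μ₂ = λ(1−β). Set λ₁ = αλ and κ = λ₁/(μ₂ n₂), and assume κ < 1. Then log(1 − m₂/n₂) + m₂/n₂ − log κ + κ − 1 < 0. -/
/-- Exponential-rate comparison under complete resource pooling: for `κ < 1`,
`log(1 - m₂/n₂) + m₂/n₂ - log κ + κ - 1 < 0`, showing `P(I₁ = 0)` is
exponentially negligible relative to the stationary probability near the fluid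
point. -/
theorem rate_comparison_neg
    (lam μ₂ n₂ m₂ α β lam₁ κ : ℝ)
    (hlam : 0 < lam) (hμ₂ : 0 < μ₂) (hn₂ : 0 < n₂)
    (hm₂0 : 0 < m₂) (hm₂ : m₂ < n₂)
    (hα : α ∈ Set.Ioc (0 : ℝ) 1) (hβ : β ∈ Set.Ioo (0 : ℝ) 1)
    (hpool : 1 < α + β)
    (hbal : (n₂ - m₂) * μ₂ = lam * (1 - β))
    (hlam₁ : lam₁ = α * lam)
    (hκ : κ = lam₁ / (μ₂ * n₂))
    (hκ1 : κ < 1) :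
    Real.log (1 - m₂ / n₂) + m₂ / n₂ - Real.log κ + κ - 1 < 0 := by
  obtain ⟨hα0, hα1⟩ := hα
  obtain ⟨hβ0, hβ1⟩ := hβ
  have hden : 0 < μ₂ * n₂ := mul_pos hμ₂ hn₂
  have hx1 : m₂ / n₂ < 1 := (div_lt_one hn₂).mpr hm₂
  have ha0 : (0:ℝ) < 1 - m₂ / n₂ := by linarith
  have haeq : 1 - m₂ / n₂ = lam * (1 - β) / (μ₂ * n₂) := by
    rw [eq_div_iff (ne_of_gt hden), ← hbal]
    field_simp
  have haκ : 1 - m₂ / n₂ < κ := by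
    rw [haeq, hκ, hlam₁]
    apply div_lt_div_of_pos_right ?_ hden
    nlinarith
  have hκ0 : (0:ℝ) < κ := lt_trans ha0 haκ
  have hne : (1 - m₂ / n₂) / κ ≠ 1 := by
    intro h
    have := (div_eq_one_iff_eq (ne_of_gt hκ0)).mp h
    linarith
  have hlog : Real.log ((1 - m₂ / n₂) / κ) < (1 - m₂ / n₂) / κ - 1 :=
    lt_of_le_of_ne (Real.log_le_sub_one_of_pos (div_pos ha0 hκ0))
      (fun h => hne (by
        have h0 : Real.log ((1 - m₂ / n₂) / κ) = 0 := by
          by_contra hne0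
          have hlt := Real.add_one_lt_exp hne0
          rw [Real.exp_log (div_pos ha0 hκ0)] at hlt
          linarith
        have := Real.log_eq_zero.mp h0
        rcases this with h1 | h1 | h1
        · exact absurd h1 (ne_of_gt (div_pos ha0 hκ0))
        · exact h1
        · nlinarith [div_pos ha0 hκ0]))
  rw [Real.log_div (ne_of_gt ha0) (ne_of_gt hκ0)] at hlog
  have key : (1 - m₂ / n₂) / κ - 1 + κ - (1 - m₂ / n₂) < 0 := by
    have : (1 - m₂ / n₂) / κ - 1 + κ - (1 - m₂ / n₂)
        = ((1 - m₂ / n₂) - κ) * (1 - κ) / κ := by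
      field_simp
      ring
    rw [this]
    apply div_neg_of_neg_of_pos ?_ hκ0
    nlinarith
  linarith
end
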